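/- Let F : ℂⁿ⁻¹ × ℝ → ℂⁿ (identified with ℝ^{2n−1} → ℝ^{2n}) be a C¹ map of the form F(w,s) = w + (1−s)·π(w) restricted to a C¹ hypersurface, and suppose at a point (z, 1) the derivative of F is invertible (in particular π(z) ≠ 0 and π(z) is transversal to the hypersurface at z). Then there exist a neighborhood W of z and σ > 0 such that F restricts to a bijection from (W ∩ ∂Ω) × (1−σ, 1] onto W ∩ closure(Ω), where ∂Ω is the hypersurface bounding the open set Ω on the side into which π(z) points. -/

import Mathlib

/-!
Augment `F` by the defining function: `Ψ (w, t) = (w + t • π w, r w)` has derivative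
`(u, τ) ↦ (u + τ • π z, dr_z u)` at `(z, 0)`, which is invertible precisely because `π z` is
transversal to `ker dr_z`. By the inverse function theorem `Ψ` is injective and open on a box
`W₀ × (-σ, σ)`, and after shrinking, `r` strictly decreases along every segment
`t ↦ w + t • π w` of the box. Take `W = {y | (y, 0) ∈ Ψ (W₀ × (-σ, σ))}`, the points of the
form `w + t • π w` with `w ∈ ∂Ω`. Monotonicity shows that such a point lies on `∂Ω` iff `t = 0`
and in `closure Ω` iff `t ≥ 0`, so `F (w, s) = w + (1 - s) • π w` maps
`(W ∩ ∂Ω) × (1 - σ, 1]` bijectively onto `W ∩ closure Ω`.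
-/

open Set Filter Topology ContinuousLinearMap

section Collar

variable {E : Type*} [NormedAddCommGroup E] [NormedSpace ℝ E] {r : E → ℝ} {π : E → E}

def collarChart (r : E → ℝ) (π : E → E) (p : E × ℝ) : E × ℝ :=
  (p.1 + p.2 • π p.1, r p.1)

theorem collarChart_hasFDerivAt {z : E}
    (hr : DifferentiableAt ℝ r z) (hπ : DifferentiableAt ℝ π z) :
    HasFDerivAt (collarChart r π)
      (((fst ℝ E ℝ) + (snd ℝ E ℝ).smulRight (π z)).prod ((fderiv ℝ r z).comp (fst ℝ E ℝ)))
      (z, 0) := by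
  have hsmul :
      HasFDerivAt (fun p : E × ℝ => p.2 • π p.1) ((snd ℝ E ℝ).smulRight (π z)) (z, 0) := by
    have h := hasFDerivAt_snd.smul
      (hπ.hasFDerivAt.comp ((z, 0) : E × ℝ) (f := Prod.fst) hasFDerivAt_fst)
    rwa [zero_smul, zero_add] at h
  exact (hasFDerivAt_fst.add hsmul).prodMk
    (hr.hasFDerivAt.comp ((z, 0) : E × ℝ) (f := Prod.fst) hasFDerivAt_fst)

theorem injective_fst_add_smulRight_prod {A : E →L[ℝ] ℝ} {v : E} (hv : A v ≠ 0) :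
    Function.Injective (((fst ℝ E ℝ) + (snd ℝ E ℝ).smulRight v).prod (A.comp (fst ℝ E ℝ))) := by
  rw [← coe_coe, ← LinearMap.ker_eq_bot, LinearMap.ker_eq_bot']
  rintro ⟨w, t⟩ h
  simp only [coe_coe, prod_apply, add_apply, coe_fst', smulRight_apply, coe_snd', coe_comp,
    Function.comp_apply, Prod.mk_eq_zero] at h
  obtain ⟨hline, hA⟩ := h
  have ht : t = 0 := by
    have : A (w + t • v) = 0 := by rw [hline, map_zero]
    simpa [hA, hv] using this
  subst ht
  simpa using hline

theorem exists_openPartialHomeomorph_collarChart [FiniteDimensional ℝ E]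
    (hr : ContDiff ℝ 1 r) (hπ : ContDiff ℝ 1 π) {z : E} (htrans : fderiv ℝ r z (π z) ≠ 0) :
    ∃ e : OpenPartialHomeomorph (E × ℝ) (E × ℝ), ⇑e = collarChart r π ∧ (z, 0) ∈ e.source := by
  let L :=
    (LinearEquiv.ofInjectiveEndo _ (injective_fst_add_smulRight_prod htrans)).toContinuousLinearEquiv
  have hL : HasFDerivAt (collarChart r π) (L : E × ℝ →L[ℝ] E × ℝ) (z, 0) :=
    collarChart_hasFDerivAt (hr.differentiable one_ne_zero z) (hπ.differentiable one_ne_zero z)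
  have hΨ : ContDiffAt ℝ 1 (collarChart r π) (z, 0) :=
    ((contDiff_fst.add (contDiff_snd.smul (hπ.comp contDiff_fst))).prodMk
      (hr.comp contDiff_fst)).contDiffAt
  exact ⟨hΨ.toOpenPartialHomeomorph _ hL one_ne_zero, rfl,
    hΨ.mem_toOpenPartialHomeomorph_source hL one_ne_zero⟩

theorem strictAntiOn_comp_line (hr : Differentiable ℝ r) {w v : E} {D : Set ℝ}
    (hD : Convex ℝ D) (hneg : ∀ t ∈ interior D, fderiv ℝ r (w + t • v) v < 0) :
    StrictAntiOn (fun t : ℝ => r (w + t • v)) D := by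
  have hline : ∀ t : ℝ, HasDerivAt (fun t : ℝ => w + t • v) v t := fun t => by
    simpa using ((hasDerivAt_id t).smul_const v).const_add w
  refine strictAntiOn_of_deriv_neg hD ?_ fun t ht => ?_
  · exact (hr.continuous.comp
      (continuous_const.add (continuous_id.smul continuous_const))).continuousOn
  · exact ((hr _).hasFDerivAt.comp_hasDerivAt t (hline t)).deriv ▸ hneg t ht

theorem exists_collarChart_injOn_strictAntiOn [FiniteDimensional ℝ E]
    (hr : ContDiff ℝ 1 r) (hπ : ContDiff ℝ 1 π) {z : E} (htrans : fderiv ℝ r z (π z) < 0) :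
    ∃ W₀ : Set E, ∃ σ > (0 : ℝ), z ∈ W₀ ∧
      IsOpen (collarChart r π '' W₀ ×ˢ Ioo (-σ) σ) ∧
      InjOn (collarChart r π) (W₀ ×ˢ Ioo (-σ) σ) ∧
      ∀ w ∈ W₀, StrictAntiOn (fun t : ℝ => r (w + t • π w)) (Ioo (-σ) σ) := by
  obtain ⟨e, he, hze⟩ := exists_openPartialHomeomorph_collarChart hr hπ htrans.ne
  have hneg : ∀ᶠ p : E × ℝ in 𝓝 (z, 0), fderiv ℝ r (p.1 + p.2 • π p.1) (π p.1) < 0 := by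
    have hcont : Continuous fun p : E × ℝ => fderiv ℝ r (p.1 + p.2 • π p.1) (π p.1) :=
      ((hr.continuous_fderiv one_ne_zero).comp (continuous_fst.add
        (continuous_snd.smul (hπ.continuous.comp continuous_fst)))).clm_apply
        (hπ.continuous.comp continuous_fst)
    exact hcont.continuousAt.eventually_lt continuousAt_const (by simpa using htrans)
  obtain ⟨W₀, v, hW₀, hzW₀, hv, h0v, hsub⟩ :=
    mem_nhds_prod_iff'.mp (inter_mem (e.open_source.mem_nhds hze) hneg)
  obtain ⟨σ, hσ, hball⟩ := Metric.isOpen_iff.mp hv 0 h0v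
  rw [Real.ball_eq_Ioo, zero_sub, zero_add] at hball
  have hR : W₀ ×ˢ Ioo (-σ) σ ⊆ e.source ∩ {p | fderiv ℝ r (p.1 + p.2 • π p.1) (π p.1) < 0} :=
    (prod_mono subset_rfl hball).trans hsub
  refine ⟨W₀, σ, hσ, hzW₀, ?_, ?_, fun w hw => ?_⟩
  · rw [← he]
    exact e.isOpen_image_of_subset_source (hW₀.prod isOpen_Ioo) (hR.trans inter_subset_left)
  · rw [← he]
    exact e.injOn.mono (hR.trans inter_subset_left)
  · refine strictAntiOn_comp_line (hr.differentiable one_ne_zero) (convex_Ioo _ _) fun t ht => ?_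
    rw [interior_Ioo] at ht
    exact (hR (mk_mem_prod hw ht)).2

section Bijection

variable {W₀ : Set E} {σ : ℝ}

theorem mk_zero_mem_collarChart_image_iff {y : E} :
    (y, 0) ∈ collarChart r π '' W₀ ×ˢ Ioo (-σ) σ ↔
      ∃ w ∈ W₀, ∃ t ∈ Ioo (-σ) σ, w + t • π w = y ∧ r w = 0 := by
  simp [collarChart, and_assoc]

theorem mem_of_mk_zero_mem_collarChart_image
    (hanti : ∀ w ∈ W₀, StrictAntiOn (fun t : ℝ => r (w + t • π w)) (Ioo (-σ) σ))
    {y : E} (hy : (y, 0) ∈ collarChart r π '' W₀ ×ˢ Ioo (-σ) σ) (hy0 : r y = 0) : y ∈ W₀ := by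
  obtain ⟨w, hw, t, ht, rfl, hw0⟩ := mk_zero_mem_collarChart_image_iff.mp hy
  have h0 : (0 : ℝ) ∈ Ioo (-σ) σ := ⟨by linarith [ht.1, ht.2], by linarith [ht.1, ht.2]⟩
  have ht0 : t = 0 := (hanti w hw).injOn ht h0 (by simpa [hw0] using hy0)
  simpa [ht0] using hw

theorem bijOn_collar (hσ : 0 < σ)
    (hinj : InjOn (collarChart r π) (W₀ ×ˢ Ioo (-σ) σ))
    (hanti : ∀ w ∈ W₀, StrictAntiOn (fun t : ℝ => r (w + t • π w)) (Ioo (-σ) σ)) :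
    BijOn (fun p : E × ℝ => p.1 + (1 - p.2) • π p.1)
      (({y | (y, 0) ∈ collarChart r π '' W₀ ×ˢ Ioo (-σ) σ} ∩ {x | r x = 0}) ×ˢ Ioc (1 - σ) 1)
      ({y | (y, 0) ∈ collarChart r π '' W₀ ×ˢ Ioo (-σ) σ} ∩ {x | r x ≤ 0}) := by
  have h0 : (0 : ℝ) ∈ Ioo (-σ) σ := ⟨neg_lt_zero.mpr hσ, hσ⟩
  refine ⟨?_, ?_, ?_⟩
  · rintro ⟨w, s⟩ ⟨⟨hwW, hw0 : r w = 0⟩, hs₁, hs₂⟩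
    have hw := mem_of_mk_zero_mem_collarChart_image hanti hwW hw0
    have hs : 1 - s ∈ Ioo (-σ) σ := ⟨by linarith, by linarith⟩
    refine ⟨mk_zero_mem_collarChart_image_iff.mpr ⟨w, hw, 1 - s, hs, rfl, hw0⟩, ?_⟩
    simpa [hw0] using ((hanti w hw).le_iff_ge hs h0).mpr (by linarith)
  · rintro ⟨w, s⟩ ⟨⟨hwW, hw0 : r w = 0⟩, hs₁, hs₂⟩
      ⟨w', s'⟩ ⟨⟨hwW', hw0' : r w' = 0⟩, hs₁', hs₂'⟩ heq
    have hws := hinj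
      (mk_mem_prod (mem_of_mk_zero_mem_collarChart_image hanti hwW hw0)
        (show 1 - s ∈ Ioo (-σ) σ from ⟨by linarith, by linarith⟩))
      (mk_mem_prod (mem_of_mk_zero_mem_collarChart_image hanti hwW' hw0')
        (show 1 - s' ∈ Ioo (-σ) σ from ⟨by linarith, by linarith⟩))
      (Prod.ext heq (hw0.trans hw0'.symm))
    simp only [Prod.mk.injEq, sub_right_inj] at hws
    simp [hws]
  · rintro y ⟨hyW, hy0 : r y ≤ 0⟩
    obtain ⟨w, hw, t, ht, rfl, hw0⟩ := mk_zero_mem_collarChart_image_iff.mp hyW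
    have ht0 : 0 ≤ t := ((hanti w hw).le_iff_ge ht h0).mp (by simpa [hw0] using hy0)
    refine ⟨(w, 1 - t), ⟨⟨?_, hw0⟩, by simp [ht.2], by simp [ht0]⟩, by simp⟩
    exact mk_zero_mem_collarChart_image_iff.mpr ⟨w, hw, 0, h0, by simp, hw0⟩

end Bijection

end Collar

theorem stmt_16_general (n : ℕ) (Ω : Set (Fin n → ℂ)) (r : (Fin n → ℂ) → ℝ)
    (hr : ContDiff ℝ 1 r)
    (hΩr : Ω = {x | r x < 0})
    (hfr : frontier Ω = {x | r x = 0})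
    (π : (Fin n → ℂ) → (Fin n → ℂ)) (hπ : ContDiff ℝ 1 π)
    (z : Fin n → ℂ) (hz : z ∈ frontier Ω)
    (htrans : fderiv ℝ r z (π z) < 0) :
    ∃ W ∈ nhds z, ∃ σ > (0:ℝ),
      Set.BijOn (fun p : (Fin n → ℂ) × ℝ => p.1 + (1 - p.2) • π p.1)
        ((W ∩ frontier Ω) ×ˢ Set.Ioc (1 - σ) 1) (W ∩ closure Ω) := by
  have hclosure : closure Ω = {x | r x ≤ 0} := by
    rw [closure_eq_self_union_frontier, hfr, hΩr]
    ext x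
    simp [le_iff_lt_or_eq]
  obtain ⟨W₀, σ, hσ, hzW₀, hopen, hinj, hanti⟩ :=
    exists_collarChart_injOn_strictAntiOn hr hπ htrans
  have hzW : (z, 0) ∈ collarChart r π '' W₀ ×ˢ Ioo (-σ) σ := by
    rw [hfr] at hz
    exact mk_zero_mem_collarChart_image_iff.mpr
      ⟨z, hzW₀, 0, ⟨neg_lt_zero.mpr hσ, hσ⟩, by simp, hz⟩
  refine ⟨_, (hopen.preimage (continuous_id.prodMk continuous_const)).mem_nhds hzW, σ, hσ, ?_⟩
  rw [hfr, hclosure]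
  exact bijOn_collar hσ hinj hanti

/-- Lemma 2 of the paper.  The `C¹` hypersurface `∂Ω = frontier Ω` is given as the zero
set of a `C¹` defining function `r` with nonvanishing derivative, `π` is a `C¹` vector
field which is transversal to the hypersurface at `z` and points into `Ω`
(`fderiv ℝ r z (π z) < 0`).  Then `F (w, s) = w + (1 - s) • π w` is a bijection from
`(W ∩ ∂Ω) × (1 - σ, 1]` onto `W ∩ closure Ω` for a suitable neighborhood `W` of `z`. -/
theorem stmt_16 (n : ℕ) (Ω : Set (Fin n → ℂ)) (r : (Fin n → ℂ) → ℝ)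
    (hΩ : IsOpen Ω) (hbd : Bornology.IsBounded Ω)
    (hr : ContDiff ℝ 1 r)
    (hΩr : Ω = {x | r x < 0})
    (hfr : frontier Ω = {x | r x = 0})
    (hgrad : ∀ x ∈ frontier Ω, fderiv ℝ r x ≠ 0)
    (π : (Fin n → ℂ) → (Fin n → ℂ)) (hπ : ContDiff ℝ 1 π)
    (z : Fin n → ℂ) (hz : z ∈ frontier Ω)
    (hπz : π z ≠ 0) (htrans : fderiv ℝ r z (π z) < 0) :
    ∃ W ∈ nhds z, ∃ σ > (0:ℝ),
      Set.BijOn (fun p : (Fin n → ℂ) × ℝ => p.1 + (1 - p.2) • π p.1)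
        ((W ∩ frontier Ω) ×ˢ Set.Ioc (1 - σ) 1) (W ∩ closure Ω) :=
  stmt_16_general n Ω r hr hΩr hfr π hπ z hz htrans
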